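/- An algebra A in a monoidal category C is Frobenius if and only if there exists a self-adjunction (ρ : 𝟙 → A ⊗ A, λ : A ⊗ A → 𝟙) exhibiting A as a left dual of itself, such that λ is associative: λ ∘ (m_A ⊗ id_A) = λ ∘ (id_A ⊗ m_A). -/

import Mathlib

open CategoryTheory CategoryTheory.MonoidalCategory

universe v u

variable {C : Type u} [Category.{v} C] [MonoidalCategory C]

/-- `(ϑ, e)` is a Frobenius pair for the algebra `A`. -/
def Mon_.IsFrobeniusPair (A : Mon C) (ϑ : A.X ⟶ 𝟙_ C) (e : 𝟙_ C ⟶ A.X ⊗ A.X) : Prop :=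
  ((ρ_ A.X).inv ≫ (A.X ◁ e) ≫ (α_ A.X A.X A.X).inv ≫ ((MonObj.mul (X := A.X)) ▷ A.X) =
      (λ_ A.X).inv ≫ (e ▷ A.X) ≫ (α_ A.X A.X A.X).hom ≫ (A.X ◁ (MonObj.mul (X := A.X)))) ∧
    (e ≫ (ϑ ▷ A.X) ≫ (λ_ A.X).hom = (MonObj.one (X := A.X))) ∧
    (e ≫ (A.X ◁ ϑ) ≫ (ρ_ A.X).hom = (MonObj.one (X := A.X)))

/-- `A` is a Frobenius algebra. -/
def Mon_.IsFrobenius (A : Mon C) : Prop :=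
  ∃ (ϑ : A.X ⟶ 𝟙_ C) (e : 𝟙_ C ⟶ A.X ⊗ A.X), Mon_.IsFrobeniusPair A ϑ e

section Aux

variable (A : Mon C)

private lemma aux_snake1 (ϑ : A.X ⟶ 𝟙_ C) (e : 𝟙_ C ⟶ A.X ⊗ A.X)
    (h1 : (ρ_ A.X).inv ≫ (A.X ◁ e) ≫ (α_ A.X A.X A.X).inv ≫ ((MonObj.mul (X := A.X)) ▷ A.X) =
      (λ_ A.X).inv ≫ (e ▷ A.X) ≫ (α_ A.X A.X A.X).hom ≫ (A.X ◁ (MonObj.mul (X := A.X))))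
    (h3 : e ≫ (A.X ◁ ϑ) ≫ (ρ_ A.X).hom = (MonObj.one (X := A.X))) :
    (λ_ A.X).inv ≫ (e ▷ A.X) ≫ (α_ A.X A.X A.X).hom ≫ (A.X ◁ ((MonObj.mul (X := A.X)) ≫ ϑ)) ≫ (ρ_ A.X).hom =
      𝟙 A.X := by
  have h3' : e ≫ (A.X ◁ ϑ) = (MonObj.one (X := A.X)) ≫ (ρ_ A.X).inv := by rw [← h3]; simp
  rw [MonoidalCategory.whiskerLeft_comp]
  slice_lhs 1 4 => rw [← h1]
  slice_lhs 4 5 => rw [← whisker_exchange]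
  slice_lhs 3 4 => rw [← associator_inv_naturality_right]
  slice_lhs 2 3 => rw [← MonoidalCategory.whiskerLeft_comp, h3', MonoidalCategory.whiskerLeft_comp]
  slice_lhs 5 6 => rw [rightUnitor_naturality]
  slice_lhs 3 5 => rw [show (A.X ◁ (ρ_ A.X).inv) ≫ (α_ A.X A.X (𝟙_ C)).inv ≫
    (ρ_ (A.X ⊗ A.X)).hom = 𝟙 _ by monoidal]
  simp [MonObj.mul_one]

private lemma aux_snake2 (ϑ : A.X ⟶ 𝟙_ C) (e : 𝟙_ C ⟶ A.X ⊗ A.X)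
    (h1 : (ρ_ A.X).inv ≫ (A.X ◁ e) ≫ (α_ A.X A.X A.X).inv ≫ ((MonObj.mul (X := A.X)) ▷ A.X) =
      (λ_ A.X).inv ≫ (e ▷ A.X) ≫ (α_ A.X A.X A.X).hom ≫ (A.X ◁ (MonObj.mul (X := A.X))))
    (h2 : e ≫ (ϑ ▷ A.X) ≫ (λ_ A.X).hom = (MonObj.one (X := A.X))) :
    (ρ_ A.X).inv ≫ (A.X ◁ e) ≫ (α_ A.X A.X A.X).inv ≫ (((MonObj.mul (X := A.X)) ≫ ϑ) ▷ A.X) ≫ (λ_ A.X).hom =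
      𝟙 A.X := by
  have h2' : e ≫ (ϑ ▷ A.X) = (MonObj.one (X := A.X)) ≫ (λ_ A.X).inv := by rw [← h2]; simp
  rw [comp_whiskerRight]
  slice_lhs 1 4 => rw [h1]
  slice_lhs 4 5 => rw [whisker_exchange]
  slice_lhs 3 4 => rw [← associator_naturality_left]
  slice_lhs 2 3 => rw [← comp_whiskerRight, h2', comp_whiskerRight]
  slice_lhs 5 6 => rw [leftUnitor_naturality]
  slice_lhs 3 5 => rw [show ((λ_ A.X).inv ▷ A.X) ≫ (α_ (𝟙_ C) A.X A.X).hom ≫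
    (λ_ (A.X ⊗ A.X)).hom = 𝟙 _ by monoidal]
  simp [MonObj.one_mul]

variable (ρ : 𝟙_ C ⟶ A.X ⊗ A.X) (l : A.X ⊗ A.X ⟶ 𝟙_ C)

private lemma aux_l_eq_mul_counitL
    (ha : ((MonObj.mul (X := A.X)) ▷ A.X) ≫ l = (α_ A.X A.X A.X).hom ≫ (A.X ◁ (MonObj.mul (X := A.X))) ≫ l) :
    l = (MonObj.mul (X := A.X)) ≫ (λ_ A.X).inv ≫ ((MonObj.one (X := A.X)) ▷ A.X) ≫ l := by
  conv_rhs =>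
    slice 1 2; rw [leftUnitor_inv_naturality]
  slice_rhs 2 3 => rw [whisker_exchange]
  have ha' : (A.X ◁ (MonObj.mul (X := A.X))) ≫ l = (α_ A.X A.X A.X).inv ≫ ((MonObj.mul (X := A.X)) ▷ A.X) ≫ l := by
    rw [ha]; simp
  slice_rhs 3 4 => rw [ha']
  slice_rhs 2 3 => rw [associator_inv_naturality_left]
  slice_rhs 3 4 => rw [← comp_whiskerRight, MonObj.one_mul A.X]
  slice_rhs 1 3 => rw [show (λ_ (A.X ⊗ A.X)).inv ≫ (α_ (𝟙_ C) A.X A.X).inv ≫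
    ((λ_ A.X).hom ▷ A.X) = 𝟙 _ by monoidal]
  simp

private lemma aux_l_eq_mul_counitR
    (ha : ((MonObj.mul (X := A.X)) ▷ A.X) ≫ l = (α_ A.X A.X A.X).hom ≫ (A.X ◁ (MonObj.mul (X := A.X))) ≫ l) :
    l = (MonObj.mul (X := A.X)) ≫ (ρ_ A.X).inv ≫ (A.X ◁ (MonObj.one (X := A.X))) ≫ l := by
  conv_rhs =>
    slice 1 2; rw [rightUnitor_inv_naturality]
  slice_rhs 2 3 => rw [← whisker_exchange]
  slice_rhs 3 4 => rw [ha]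
  slice_rhs 2 3 => rw [associator_naturality_right]
  slice_rhs 3 4 => rw [← MonoidalCategory.whiskerLeft_comp, MonObj.mul_one A.X]
  slice_rhs 1 3 => rw [show (ρ_ (A.X ⊗ A.X)).inv ≫ (α_ A.X A.X (𝟙_ C)).hom ≫
    (A.X ◁ (ρ_ A.X).hom) = 𝟙 _ by monoidal]
  simp

private lemma aux_counit2
    (hl : (ρ_ A.X).inv ≫ (A.X ◁ ρ) ≫ (α_ A.X A.X A.X).inv ≫ (l ▷ A.X) ≫ (λ_ A.X).hom =
            𝟙 A.X) :
    ρ ≫ (((λ_ A.X).inv ≫ ((MonObj.one (X := A.X)) ▷ A.X) ≫ l) ▷ A.X) ≫ (λ_ A.X).hom = (MonObj.one (X := A.X)) := by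
  conv_rhs => rw [← Category.comp_id (MonObj.one (X := A.X)), ← hl]
  slice_rhs 1 2 => rw [rightUnitor_inv_naturality]
  slice_rhs 2 3 => rw [← whisker_exchange]
  slice_rhs 3 4 => rw [associator_inv_naturality_left]
  slice_rhs 1 2 => rw [show (ρ_ (𝟙_ C)).inv ≫ ((𝟙_ C) ◁ ρ) = ρ ≫ (λ_ (A.X ⊗ A.X)).inv by
    rw [← unitors_inv_equal, ← leftUnitor_inv_naturality]]
  slice_rhs 2 3 => rw [show (λ_ (A.X ⊗ A.X)).inv ≫ (α_ (𝟙_ C) A.X A.X).inv =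
    (λ_ A.X).inv ▷ A.X by monoidal]
  simp only [comp_whiskerRight, Category.assoc]

private lemma aux_counit3
    (hρ : (λ_ A.X).inv ≫ (ρ ▷ A.X) ≫ (α_ A.X A.X A.X).hom ≫ (A.X ◁ l) ≫ (ρ_ A.X).hom =
            𝟙 A.X) :
    ρ ≫ (A.X ◁ ((ρ_ A.X).inv ≫ (A.X ◁ (MonObj.one (X := A.X))) ≫ l)) ≫ (ρ_ A.X).hom = (MonObj.one (X := A.X)) := by
  conv_rhs => rw [← Category.comp_id (MonObj.one (X := A.X)), ← hρ]
  slice_rhs 1 2 => rw [leftUnitor_inv_naturality]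
  slice_rhs 2 3 => rw [whisker_exchange]
  slice_rhs 3 4 => rw [associator_naturality_right]
  slice_rhs 1 2 => rw [show (λ_ (𝟙_ C)).inv ≫ (ρ ▷ (𝟙_ C)) = ρ ≫ (ρ_ (A.X ⊗ A.X)).inv by
    rw [unitors_inv_equal, ← rightUnitor_inv_naturality]]
  slice_rhs 2 3 => rw [show (ρ_ (A.X ⊗ A.X)).inv ≫ (α_ A.X A.X (𝟙_ C)).hom =
    A.X ◁ (ρ_ A.X).inv by monoidal]
  simp only [MonoidalCategory.whiskerLeft_comp, Category.assoc]

private lemma aux_mate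
    (hρ : (λ_ A.X).inv ≫ (ρ ▷ A.X) ≫ (α_ A.X A.X A.X).hom ≫ (A.X ◁ l) ≫ (ρ_ A.X).hom =
            𝟙 A.X)
    (ha : ((MonObj.mul (X := A.X)) ▷ A.X) ≫ l = (α_ A.X A.X A.X).hom ≫ (A.X ◁ (MonObj.mul (X := A.X))) ≫ l) :
    (((λ_ A.X).inv ≫ (ρ ▷ A.X) ≫ (α_ A.X A.X A.X).hom ≫ (A.X ◁ (MonObj.mul (X := A.X)))) ▷ A.X) ≫
      (α_ A.X A.X A.X).hom ≫ (A.X ◁ l) ≫ (ρ_ A.X).hom = (MonObj.mul (X := A.X)) := by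
  simp only [comp_whiskerRight, Category.assoc]
  slice_lhs 4 5 => rw [associator_naturality_middle]
  slice_lhs 5 6 => rw [← MonoidalCategory.whiskerLeft_comp, ha,
    MonoidalCategory.whiskerLeft_comp, MonoidalCategory.whiskerLeft_comp]
  slice_lhs 3 5 => rw [show ((α_ A.X A.X A.X).hom ▷ A.X) ≫ (α_ A.X (A.X ⊗ A.X) A.X).hom ≫
    (A.X ◁ (α_ A.X A.X A.X).hom) = (α_ (A.X ⊗ A.X) A.X A.X).hom ≫
    (α_ A.X A.X (A.X ⊗ A.X)).hom by monoidal]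
  slice_lhs 2 3 => rw [associator_naturality_left]
  slice_lhs 4 5 => rw [← associator_naturality_right]
  slice_lhs 3 4 => rw [← whisker_exchange]
  slice_lhs 1 2 => rw [show ((λ_ A.X).inv ▷ A.X) ≫ (α_ (𝟙_ C) A.X A.X).hom =
    (λ_ (A.X ⊗ A.X)).inv by monoidal]
  slice_lhs 1 2 => rw [← leftUnitor_inv_naturality]
  slice_lhs 2 6 => rw [hρ]
  simp

private lemma aux_retract
    (hl : (ρ_ A.X).inv ≫ (A.X ◁ ρ) ≫ (α_ A.X A.X A.X).inv ≫ (l ▷ A.X) ≫ (λ_ A.X).hom =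
            𝟙 A.X)
    (g : A.X ⟶ A.X ⊗ A.X) :
    (ρ_ A.X).inv ≫ (A.X ◁ ρ) ≫ (α_ A.X A.X A.X).inv ≫
      (((g ▷ A.X) ≫ (α_ A.X A.X A.X).hom ≫ (A.X ◁ l) ≫ (ρ_ A.X).hom) ▷ A.X) = g := by
  simp only [comp_whiskerRight, Category.assoc]
  slice_lhs 3 4 => rw [← associator_inv_naturality_left]
  slice_lhs 2 3 => rw [whisker_exchange]
  slice_lhs 1 2 => rw [← rightUnitor_inv_naturality]
  slice_lhs 2 3 => rw [show (ρ_ (A.X ⊗ A.X)).inv ≫ ((A.X ⊗ A.X) ◁ ρ) =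
    (A.X ◁ (ρ_ A.X).inv) ≫ (A.X ◁ (A.X ◁ ρ)) ≫ (α_ A.X A.X (A.X ⊗ A.X)).inv by
      slice_rhs 2 3 => rw [associator_inv_naturality_right]
      slice_rhs 1 2 => rw [show (A.X ◁ (ρ_ A.X).inv) ≫ (α_ A.X A.X (𝟙_ C)).inv =
        (ρ_ (A.X ⊗ A.X)).inv by monoidal]]
  slice_lhs 4 6 => rw [show (α_ A.X A.X (A.X ⊗ A.X)).inv ≫ (α_ (A.X ⊗ A.X) A.X A.X).inv ≫
    ((α_ A.X A.X A.X).hom ▷ A.X) = (A.X ◁ (α_ A.X A.X A.X).inv) ≫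
    (α_ A.X (A.X ⊗ A.X) A.X).inv by monoidal]
  slice_lhs 5 6 => rw [← associator_inv_naturality_middle]
  slice_lhs 6 7 => rw [show (α_ A.X (𝟙_ C) A.X).inv ≫ ((ρ_ A.X).hom ▷ A.X) =
    A.X ◁ (λ_ A.X).hom by monoidal]
  slice_lhs 2 6 => rw [← MonoidalCategory.whiskerLeft_comp,
    ← MonoidalCategory.whiskerLeft_comp, ← MonoidalCategory.whiskerLeft_comp,
    ← MonoidalCategory.whiskerLeft_comp]
  rw [hl]
  simp

end Aux

/-- An algebra `A` is Frobenius iff there is a self-adjunction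
`(ρ : 𝟙 ⟶ A ⊗ A, λ : A ⊗ A ⟶ 𝟙)` satisfying the snake identities, with `λ` associative. -/
theorem frobenius_iff_selfAdjunction_associative (A : Mon C) :
    Mon_.IsFrobenius A ↔
      ∃ (ρ : 𝟙_ C ⟶ A.X ⊗ A.X) (l : A.X ⊗ A.X ⟶ 𝟙_ C),
        ((λ_ A.X).inv ≫ (ρ ▷ A.X) ≫ (α_ A.X A.X A.X).hom ≫ (A.X ◁ l) ≫ (ρ_ A.X).hom =
            𝟙 A.X) ∧
        ((ρ_ A.X).inv ≫ (A.X ◁ ρ) ≫ (α_ A.X A.X A.X).inv ≫ (l ▷ A.X) ≫ (λ_ A.X).hom =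
            𝟙 A.X) ∧
        (((MonObj.mul (X := A.X)) ▷ A.X) ≫ l = (α_ A.X A.X A.X).hom ≫ (A.X ◁ (MonObj.mul (X := A.X))) ≫ l) := by
  constructor
  · rintro ⟨ϑ, e, h1, h2, h3⟩
    refine ⟨e, (MonObj.mul (X := A.X)) ≫ ϑ, ?_, ?_, ?_⟩
    · exact aux_snake1 A ϑ e h1 h3
    · exact aux_snake2 A ϑ e h1 h2
    · rw [MonObj.mul_assoc_assoc A.X]
  · rintro ⟨ρ, l, hρ, hl, ha⟩
    refine ⟨(λ_ A.X).inv ≫ ((MonObj.one (X := A.X)) ▷ A.X) ≫ l, ρ, ?_, ?_, ?_⟩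
    · -- the Frobenius law
      have h2 := aux_retract A ρ l hl
        ((λ_ A.X).inv ≫ (ρ ▷ A.X) ≫ (α_ A.X A.X A.X).hom ≫ (A.X ◁ (MonObj.mul (X := A.X))))
      rw [aux_mate A ρ l hρ ha] at h2
      exact h2
    · exact aux_counit2 A ρ l hl
    · -- identify the two counits, then use aux_counit3
      have hϑ : (λ_ A.X).inv ≫ ((MonObj.one (X := A.X)) ▷ A.X) ≫ l =
          (ρ_ A.X).inv ≫ (A.X ◁ (MonObj.one (X := A.X))) ≫ l := by
        conv_lhs => rw [aux_l_eq_mul_counitR A l ha]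
        rw [MonObj.one_mul_assoc A.X]
        simp
      rw [hϑ]
      exact aux_counit3 A ρ l hρ
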